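/- Distance-based characterization of AU: let K=(V,E,ℓ) be a finite Kripke structure with total E and let n = |V|. Then K,x ⊨ A φ U ψ iff there exists a function d : V → {0,1,…,n} such that d(x) < n and for every state y: if d(y) = 0 then K,y ⊨ ψ, and if 1 ≤ d(y) < n then K,y ⊨ φ and every successor y' of y has d(y') < d(y). -/

import Mathlib

/-!
A state satisfies `A φ U ψ` iff it lies in the least fixed point of
`S ↦ ψ ∪ (φ ∩ AX S)`. On a finite structure the approximants `S₀ ⊆ S₁ ⊆ ⋯` stabilise after
fewer than `|V|` steps, and the first stage containing a state is the required `d`. Conversely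
`d` decreases strictly along any path as long as it is positive, so every path from `x` reaches
`ψ` through `φ`-states.
-/

/-- `K, x ⊨ A φ U ψ` (structure semantics over infinite paths). -/
def SatAU {V : Type*} (E : V → V → Prop) (φ ψ : V → Prop) (x : V) : Prop :=
  ∀ ρ : ℕ → V, (∀ i, E (ρ i) (ρ (i + 1))) → ρ 0 = x →
    ∃ i, ψ (ρ i) ∧ ∀ j < i, φ (ρ j)

theorem Set.exists_lt_card_succ_eq_of_monotone {V : Type*} [Fintype V] {s : ℕ → Set V}
    (hs : Monotone s) (h₀ : (s 0).Nonempty) : ∃ k < Fintype.card V, s (k + 1) = s k := by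
  by_contra! hne
  have hgrow : ∀ k ≤ Fintype.card V, k + 1 ≤ (s k).ncard := by
    intro k hk
    induction k with
    | zero => exact (Set.ncard_pos (Set.toFinite _)).mpr h₀
    | succ k ih =>
      have hlt : (s k).ncard < (s (k + 1)).ncard :=
        Set.ncard_lt_ncard ((hs k.le_succ).ssubset_of_ne (hne k hk).symm)
      have := ih (by omega)
      omega
  have hbound : (s (Fintype.card V)).ncard ≤ Fintype.card V := by
    simpa [Nat.card_eq_fintype_card] using Set.ncard_le_ncard (Set.subset_univ (s _))
  have := hgrow _ le_rfl
  omega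

theorem exists_path_of_total {V : Type*} {E : V → V → Prop} (hE : ∀ v, ∃ w, E v w) (x : V) :
    ∃ ρ : ℕ → V, (∀ i, E (ρ i) (ρ (i + 1))) ∧ ρ 0 = x := by
  choose f hf using hE
  exact ⟨fun i => f^[i] x, fun i => by simpa [Function.iterate_succ_apply'] using hf _, rfl⟩

namespace SatAU

variable {V : Type*} {E : V → V → Prop} {φ ψ : V → Prop} {x : V}

theorem of_psi (hψ : ψ x) : SatAU E φ ψ x :=
  fun _ _ h₀ => ⟨0, h₀ ▸ hψ, fun _ hj => absurd hj (Nat.not_lt_zero _)⟩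

theorem of_forall_succ (hφ : φ x) (hsucc : ∀ y, E x y → SatAU E φ ψ y) : SatAU E φ ψ x := by
  intro ρ hρ h₀
  obtain ⟨i, hψi, hφi⟩ :=
    hsucc (ρ 1) (h₀ ▸ hρ 0) (fun i => ρ (i + 1)) (fun i => hρ (i + 1)) rfl
  refine ⟨i + 1, hψi, fun j hj => ?_⟩
  cases j with
  | zero => exact h₀ ▸ hφ
  | succ j => exact hφi j (by omega)

theorem exists_psi (hE : ∀ v, ∃ w, E v w) (h : SatAU E φ ψ x) : ∃ y, ψ y := by
  obtain ⟨ρ, hρ, h₀⟩ := exists_path_of_total hE x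
  obtain ⟨i, hψi, -⟩ := h ρ hρ h₀
  exact ⟨_, hψi⟩

theorem mem_of_closed (hE : ∀ v, ∃ w, E v w) {T : Set V} (hψ : ∀ y, ψ y → y ∈ T)
    (hφ : ∀ y, φ y → (∀ y', E y y' → y' ∈ T) → y ∈ T) (h : SatAU E φ ψ x) : x ∈ T := by
  by_contra hx
  -- follow a path that leaves `T` at every `φ`-state outside `T`
  have hE' : ∀ y, ∃ y', E y y' ∧ (y ∉ T → φ y → y' ∉ T) := by
    intro y
    by_cases hy : y ∉ T ∧ φ y
    · by_contra! hall
      exact hy.1 (hφ y hy.2 fun y' hy' => by simpa [hy] using hall y' hy')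
    · obtain ⟨y', hy'⟩ := hE y
      exact ⟨y', hy', fun h₁ h₂ => absurd ⟨h₁, h₂⟩ hy⟩
  obtain ⟨ρ, hρ, h₀⟩ := exists_path_of_total hE' x
  have hout : ∀ i, (∀ j < i, φ (ρ j)) → ρ i ∉ T := by
    intro i
    induction i with
    | zero => exact fun _ => h₀ ▸ hx
    | succ i ih =>
      exact fun hφi => (hρ i).2 (ih fun j hj => hφi j (by omega)) (hφi i i.lt_succ_self)
  obtain ⟨i, hψi, hφi⟩ := h ρ (fun i => (hρ i).1) h₀
  exact hout i hφi (hψ _ hψi)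

theorem of_rank {d : V → ℕ} {n : ℕ} (hzero : ∀ y, d y = 0 → ψ y)
    (hpos : ∀ y, 1 ≤ d y → d y < n → φ y ∧ ∀ y', E y y' → d y' < d y) (hx : d x < n) :
    SatAU E φ ψ x := by
  induction hk : d x using Nat.strong_induction_on generalizing x with
  | _ k ih =>
    rcases Nat.eq_zero_or_pos k with rfl | hk₀
    · exact of_psi (hzero x hk)
    · obtain ⟨hφ, hdec⟩ := hpos x (hk ▸ hk₀) hx
      exact of_forall_succ hφ fun y hy =>
        ih (d y) (hk ▸ hdec y hy) ((hdec y hy).trans hx) rfl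

end SatAU

section Stages

variable {V : Type*} (E : V → V → Prop) (φ ψ : V → Prop)

def auStage : ℕ → Set V
  | 0 => {y | ψ y}
  | k + 1 => auStage k ∪ {y | φ y ∧ ∀ y', E y y' → y' ∈ auStage k}

theorem auStage_monotone : Monotone (auStage E φ ψ) :=
  monotone_nat_of_le_succ fun _ => Set.subset_union_left

open Classical in
noncomputable def auRank (n : ℕ) (y : V) : ℕ :=
  Nat.find (⟨n, Or.inr le_rfl⟩ : ∃ k, y ∈ auStage E φ ψ k ∨ n ≤ k)

open Classical

variable {E φ ψ} {n : ℕ} {y : V}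

theorem auRank_le : auRank E φ ψ n y ≤ n :=
  Nat.find_min' _ (Or.inr le_rfl)

theorem auRank_le_of_mem {k : ℕ} (h : y ∈ auStage E φ ψ k) : auRank E φ ψ n y ≤ k :=
  Nat.find_min' _ (Or.inl h)

theorem mem_auStage_auRank (h : auRank E φ ψ n y < n) : y ∈ auStage E φ ψ (auRank E φ ψ n y) :=
  (Nat.find_spec (⟨n, Or.inr le_rfl⟩ : ∃ k, y ∈ auStage E φ ψ k ∨ n ≤ k)).resolve_right
    (not_le.2 h)

theorem notMem_auStage_of_lt_auRank {k : ℕ} (h : k < auRank E φ ψ n y) :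
    y ∉ auStage E φ ψ k :=
  fun hy => Nat.find_min _ h (Or.inl hy)

theorem psi_of_auRank_eq_zero (hn : 0 < n) (h : auRank E φ ψ n y = 0) : ψ y := by
  have hmem := mem_auStage_auRank (h ▸ hn)
  rwa [h] at hmem

theorem phi_and_forall_auRank_lt (h₁ : 1 ≤ auRank E φ ψ n y) (hn : auRank E φ ψ n y < n) :
    φ y ∧ ∀ y', E y y' → auRank E φ ψ n y' < auRank E φ ψ n y := by
  obtain ⟨k, hk⟩ := Nat.exists_eq_add_of_le' h₁
  have hmem := mem_auStage_auRank hn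
  rw [hk] at hmem
  rcases hmem with hmem | ⟨hφ, hsucc⟩
  · exact absurd hmem (notMem_auStage_of_lt_auRank (n := n) (by omega))
  · exact ⟨hφ, fun y' hy' => by have := auRank_le_of_mem (n := n) (hsucc y' hy'); omega⟩

end Stages

/-- Distance-based characterization of `AU` (with `n = |V|`):
`K, x ⊨ A φ U ψ` iff there is `d : V → {0,…,n}` with `d(x) < n` such that
`d(y) = 0` implies `y ⊨ ψ`, and `1 ≤ d(y) < n` implies `y ⊨ φ` and every successor
`y'` of `y` has `d(y') < d(y)`. -/
theorem au_distance_characterization {V : Type*} [Fintype V] (E : V → V → Prop)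
    (hE : ∀ v, ∃ w, E v w) (φ ψ : V → Prop) (x : V) :
    SatAU E φ ψ x ↔
      ∃ d : V → ℕ, (∀ y, d y ≤ Fintype.card V) ∧ d x < Fintype.card V ∧
        ∀ y, (d y = 0 → ψ y) ∧
          (1 ≤ d y → d y < Fintype.card V →
            φ y ∧ ∀ y', E y y' → d y' < d y) := by
  constructor
  · intro hx
    have hn : 0 < Fintype.card V := Fintype.card_pos_iff.2 ⟨x⟩
    obtain ⟨k, hk, hfix⟩ := Set.exists_lt_card_succ_eq_of_monotone (auStage_monotone E φ ψ)
      (hx.exists_psi hE)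
    have hxk : x ∈ auStage E φ ψ k :=
      hx.mem_of_closed hE (fun y hy => auStage_monotone E φ ψ k.zero_le hy)
        fun y hφ hsucc => hfix ▸ Or.inr ⟨hφ, hsucc⟩
    exact ⟨auRank E φ ψ (Fintype.card V), fun _ => auRank_le,
      (auRank_le_of_mem hxk).trans_lt hk,
      fun _ => ⟨psi_of_auRank_eq_zero hn, phi_and_forall_auRank_lt⟩⟩
  · rintro ⟨d, -, hdx, hd⟩
    exact SatAU.of_rank (fun y => (hd y).1) (fun y => (hd y).2) hdx
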